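/- Let k ≥ 2 be an integer, r̄ a residue with 1 ≤ r̄ ≤ k, and A = {a ∈ ℕ : a ≥ 1 and a ≡ r̄ (mod k)}. Suppose that for every residue r modulo k there exists a matrix [[a,b],[c,d]] ∈ G_A with gcd(c, k) = 1 and d ≡ r (mod k). Then for every integer n ≥ 1, the reduction of D_A modulo kⁿ is all of ℤ/kⁿℤ. -/

import Mathlib

/-- The generator matrix `[[0,1],[1,a]]`. -/
def cfGen (a : ℕ) : Matrix (Fin 2) (Fin 2) ℤ := !![0, 1; 1, (a : ℤ)]

/-- The semigroup `G_A`: all nonempty finite products of the generators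
`[[0,1],[1,a]]` with `a ∈ A`. -/
def GSemigroup (A : Set ℕ) : Set (Matrix (Fin 2) (Fin 2) ℤ) :=
  { M | ∃ l : List ℕ, l ≠ [] ∧ (∀ a ∈ l, a ∈ A) ∧ M = (l.map cfGen).prod }

/-- The set `D_A` of bottom-right entries of matrices in `G_A`. -/
def Denoms (A : Set ℕ) : Set ℕ :=
  { d | ∃ M ∈ GSemigroup A, M 1 1 = (d : ℤ) }

/-!
Modulo `k` every generator of `G_A` reduces to `g = [[0,1],[1,r̄]]`, which is invertible
(determinant `-1`) and so has some finite order `N`. Hence for `γ ∈ G_A` the matrix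
`V = γ gᴺ⁻¹ ∈ G_A` satisfies `g V ≡ V g ≡ γ (mod k)`, which forces `V₂₂ ≡ γ₂₁` (a unit mod `k`)
and `V₁₂ + r̄ V₂₂ ≡ γ₂₂ (mod k)`. For `a = r̄ + k t ∈ A` the product `[[0,1],[1,a]] V ∈ G_A` has
bottom-right entry `V₁₂ + r̄ V₂₂ + k t V₂₂`; as `V₂₂` is a unit mod `kⁿ`, a suitable `t` makes
it congruent mod `kⁿ` to any `x` with `x ≡ γ₂₂ (mod k)`.
-/

section Semigroup

variable {A : Set ℕ}

lemma cfGen_mem_gSemigroup {a : ℕ} (ha : a ∈ A) : cfGen a ∈ GSemigroup A :=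
  ⟨[a], by simp, by simpa using ha, by simp⟩

lemma mul_mem_gSemigroup {M N : Matrix (Fin 2) (Fin 2) ℤ} (hM : M ∈ GSemigroup A)
    (hN : N ∈ GSemigroup A) : M * N ∈ GSemigroup A := by
  obtain ⟨l, hl, hlA, rfl⟩ := hM
  obtain ⟨l', -, hl'A, rfl⟩ := hN
  refine ⟨l ++ l', by simp [hl], fun a ha => ?_, by simp⟩
  rcases List.mem_append.mp ha with ha | ha
  exacts [hlA a ha, hl'A a ha]

lemma mul_pow_mem_gSemigroup {M : Matrix (Fin 2) (Fin 2) ℤ} {a : ℕ} (hM : M ∈ GSemigroup A)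
    (ha : a ∈ A) (j : ℕ) : M * cfGen a ^ j ∈ GSemigroup A := by
  induction j with
  | zero => simpa using hM
  | succ j ih =>
    simpa [pow_succ, ← mul_assoc] using mul_mem_gSemigroup ih (cfGen_mem_gSemigroup ha)

lemma nonneg_of_mem_gSemigroup {M : Matrix (Fin 2) (Fin 2) ℤ} (hM : M ∈ GSemigroup A)
    (i j : Fin 2) : 0 ≤ M i j := by
  obtain ⟨l, -, -, rfl⟩ := hM
  induction l generalizing i with
  | nil => fin_cases i <;> fin_cases j <;> simp
  | cons a l ih =>
    rw [List.map_cons, List.prod_cons, Matrix.mul_apply]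
    refine Finset.sum_nonneg fun c _ => mul_nonneg ?_ (ih c)
    fin_cases i <;> fin_cases c <;> simp [cfGen]

end Semigroup

lemma cfGen_mul_apply_one_one (a : ℕ) (M : Matrix (Fin 2) (Fin 2) ℤ) :
    (cfGen a * M) 1 1 = M 0 1 + a * M 1 1 := by
  simp [cfGen, Matrix.mul_apply, Fin.sum_univ_two]

lemma mul_cfGen_apply_one_zero (a : ℕ) (M : Matrix (Fin 2) (Fin 2) ℤ) :
    (M * cfGen a) 1 0 = M 1 1 := by
  simp [cfGen, Matrix.mul_apply, Fin.sum_univ_two]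

lemma det_cfGen (a : ℕ) : (cfGen a).det = -1 := by
  simp [cfGen, Matrix.det_fin_two_of]

section Reduction

variable {k r : ℕ} {A : Set ℕ}

local notation "φ" => RingHom.mapMatrix (m := Fin 2) (Int.castRingHom (ZMod k))

lemma intModEq_of_mapMatrix_eq {M N : Matrix (Fin 2) (Fin 2) ℤ} (h : φ M = φ N) (i j : Fin 2) :
    M i j ≡ N i j [ZMOD k] :=
  (ZMod.intCast_eq_intCast_iff _ _ _).mp (congrFun (congrFun h i) j)

lemma mapMatrix_cfGen_of_modEq {a : ℕ} (h : a ≡ r [MOD k]) : φ (cfGen a) = φ (cfGen r) := by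
  have hcast : (a : ZMod k) = r := (ZMod.natCast_eq_natCast_iff _ _ _).mpr h
  ext i j
  fin_cases i <;> fin_cases j <;> simp [cfGen, hcast]

lemma exists_mapMatrix_eq_pow_of_mem_gSemigroup (hA : ∀ a ∈ A, a ≡ r [MOD k])
    {M : Matrix (Fin 2) (Fin 2) ℤ} (hM : M ∈ GSemigroup A) : ∃ m : ℕ, φ M = φ (cfGen r) ^ m := by
  obtain ⟨l, -, hlA, rfl⟩ := hM
  refine ⟨l.length, ?_⟩
  induction l with
  | nil => simp
  | cons a l ih =>
    simp only [List.map_cons, List.prod_cons, map_mul, List.length_cons, pow_succ']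
    rw [mapMatrix_cfGen_of_modEq (hA a (hlA a (by simp))), ih fun b hb => hlA b (by simp [hb])]

lemma exists_pow_mapMatrix_cfGen_eq_one [NeZero k] (a : ℕ) :
    ∃ N : ℕ, 0 < N ∧ φ (cfGen a) ^ N = 1 := by
  have hunit : IsUnit (φ (cfGen a)) := by
    rw [Matrix.isUnit_iff_isUnit_det, ← RingHom.map_det, det_cfGen]
    exact isUnit_one.neg.map _
  obtain ⟨u, hu⟩ := hunit
  refine ⟨orderOf u, (isOfFinOrder_of_finite u).orderOf_pos, ?_⟩
  rw [← hu, ← Units.val_pow_eq_pow_val, pow_orderOf_eq_one, Units.val_one]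

lemma exists_mem_gSemigroup_mapMatrix_eq [NeZero k] (hA : ∀ a ∈ A, a ≡ r [MOD k])
    (hr : r ∈ A) {γ : Matrix (Fin 2) (Fin 2) ℤ} (hγ : γ ∈ GSemigroup A) :
    ∃ V ∈ GSemigroup A, φ (cfGen r * V) = φ γ ∧ φ (V * cfGen r) = φ γ := by
  obtain ⟨m, hm⟩ := exists_mapMatrix_eq_pow_of_mem_gSemigroup hA hγ
  obtain ⟨N, hN, hN1⟩ := exists_pow_mapMatrix_cfGen_eq_one (k := k) r
  refine ⟨γ * cfGen r ^ (N - 1), mul_pow_mem_gSemigroup hγ hr _, ?_, ?_⟩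
  all_goals
    simp only [map_mul, map_pow, hm, ← pow_succ, ← pow_succ', ← pow_add]
    rw [show m + (N - 1) + 1 = m + N by omega, pow_add, hN1, mul_one]

end Reduction

lemma Int.ModEq.isCoprime {a b m : ℤ} (h : a ≡ b [ZMOD m]) (hb : IsCoprime b m) :
    IsCoprime a m := by
  obtain ⟨s, hs⟩ := h.dvd
  simpa [show a = b + (-s) * m by linarith] using hb.add_mul_right_left (-s)

lemma exists_add_mul_mul_modEq {k : ℕ} (hk : k ≠ 0) {c y D : ℤ} (hD : IsCoprime D k)
    (hc : c ≡ y [ZMOD k]) (n : ℕ) : ∃ t : ℕ, c + k * t * D ≡ y [ZMOD k ^ n] := by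
  obtain ⟨s, hs⟩ := hc.dvd
  obtain ⟨u, v, huv⟩ := hD.pow_right (n := n)
  have hpos : (0 : ℤ) < k ^ n := by positivity
  refine ⟨((s * u) % k ^ n).toNat, ?_⟩
  rw [Int.toNat_of_nonneg (Int.emod_nonneg _ hpos.ne')]
  calc c + k * ((s * u) % k ^ n) * D ≡ c + k * (s * u) * D [ZMOD k ^ n] := by
        gcongr; exact Int.mod_modEq _ _
    _ = y - (k * s * v) * k ^ n := by linear_combination k * s * huv - hs
    _ ≡ y [ZMOD k ^ n] := (Int.modEq_iff_dvd.mpr ⟨k * s * v, by ring⟩)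

theorem surjective_prime_power_of_coprime_bottom_row_general (k r : ℕ)
    (hk : 2 ≤ k) (hr1 : 1 ≤ r)
    (h : ∀ x : ZMod k, ∃ γ ∈ GSemigroup {a : ℕ | 1 ≤ a ∧ a ≡ r [MOD k]},
      Int.gcd (γ 1 0) (k : ℤ) = 1 ∧ ((γ 1 1 : ℤ) : ZMod k) = x) :
    ∀ n : ℕ, 1 ≤ n → ∀ x : ZMod (k ^ n),
      ∃ d ∈ Denoms {a : ℕ | 1 ≤ a ∧ a ≡ r [MOD k]}, (d : ZMod (k ^ n)) = x := by
  intro n _ x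
  have hk0 : k ≠ 0 := by omega
  have : NeZero k := ⟨hk0⟩
  obtain ⟨γ, hγ, hcop, hγx⟩ := h x.val
  obtain ⟨V, hV, hleft, hright⟩ :=
    exists_mem_gSemigroup_mapMatrix_eq (fun a ha => ha.2) (by exact ⟨hr1, rfl⟩) hγ
  have hD : IsCoprime (V 1 1) k := by
    refine Int.ModEq.isCoprime ?_ (Int.isCoprime_iff_gcd_eq_one.mpr hcop)
    simpa only [mul_cfGen_apply_one_zero] using intModEq_of_mapMatrix_eq hright 1 0
  have hc : V 0 1 + r * V 1 1 ≡ x.val [ZMOD k] := by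
    rw [← cfGen_mul_apply_one_one]
    refine (intModEq_of_mapMatrix_eq hleft 1 1).trans ?_
    exact (ZMod.intCast_eq_intCast_iff _ _ _).mp (by simpa using hγx)
  obtain ⟨t, ht⟩ := exists_add_mul_mul_modEq hk0 hD hc n
  have hM : cfGen (r + k * t) * V ∈ GSemigroup {a : ℕ | 1 ≤ a ∧ a ≡ r [MOD k]} :=
    mul_mem_gSemigroup (cfGen_mem_gSemigroup ⟨by omega, by simp [Nat.ModEq]⟩) hV
  have hM11 := nonneg_of_mem_gSemigroup hM 1 1
  refine ⟨((cfGen (r + k * t) * V) 1 1).toNat, ⟨_, hM, (Int.toNat_of_nonneg hM11).symm⟩, ?_⟩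
  have hM11_eq : (cfGen (r + k * t) * V) 1 1 = V 0 1 + r * V 1 1 + k * t * V 1 1 := by
    rw [cfGen_mul_apply_one_one]; push_cast; ring
  rw [← Int.cast_natCast, Int.toNat_of_nonneg hM11, hM11_eq, ← ZMod.natCast_zmod_val x,
    ← Int.cast_natCast (R := ZMod (k ^ n)) x.val, ZMod.intCast_eq_intCast_iff]
  exact_mod_cast ht

/-- For `A = {a ≥ 1 : a ≡ r̄ (mod k)}`: if every residue `r mod k` arises as the
bottom-right entry of some `[[a,b],[c,d]] ∈ G_A` with `gcd(c,k) = 1`, then `D_A`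
surjects onto `ℤ/kⁿℤ` for every `n ≥ 1`. -/
theorem surjective_prime_power_of_coprime_bottom_row (k r : ℕ)
    (hk : 2 ≤ k) (hr1 : 1 ≤ r) (hrk : r ≤ k)
    (h : ∀ x : ZMod k, ∃ γ ∈ GSemigroup {a : ℕ | 1 ≤ a ∧ a ≡ r [MOD k]},
      Int.gcd (γ 1 0) (k : ℤ) = 1 ∧ ((γ 1 1 : ℤ) : ZMod k) = x) :
    ∀ n : ℕ, 1 ≤ n → ∀ x : ZMod (k ^ n),
      ∃ d ∈ Denoms {a : ℕ | 1 ≤ a ∧ a ≡ r [MOD k]}, (d : ZMod (k ^ n)) = x :=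
  surjective_prime_power_of_coprime_bottom_row_general k r hk hr1 h
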